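/- arXiv:math/0107135 — 2 statements merged into one kernel-verified Lean document; each statement's English description precedes it below -/
import Mathlib

section
/- The characteristic function of the density k(x) = (1/√(2π)) e^{x/2} e^{-e^x/2} is given by φ_k(t) = (1/√π) · 2^{it} · Γ(1/2 + it), where Γ is the complex Gamma function. -/
/-!
Substituting `u = eˣ` turns `φ_k(t)` into `(2π)^{-1/2}` times the Mellin transform of `e^{-u/2}`
at `s = 1/2 + it`, which is Euler's integral `2ˢ Γ(s)`; finally `2^{1/2} / √(2π) = 1 / √π`.
-/

open Complex Real MeasureTheory

theorem mellin_eq_integral_exp_mul_comp_exp {E : Type*} [NormedAddCommGroup E] [NormedSpace ℂ E]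
    (f : ℝ → E) (s : ℂ) :
    mellin f s = ∫ x : ℝ, cexp (s * x) • f (Real.exp x) := by
  rw [mellin, ← Real.range_exp, ← Set.image_univ, integral_image_eq_integral_abs_deriv_smul
    MeasurableSet.univ (fun x _ ↦ (Real.hasDerivAt_exp x).hasDerivWithinAt)
    Real.exp_injective.injOn, setIntegral_univ]
  congr 1 with x
  have hpow : ((Real.exp x : ℝ) : ℂ) ^ (s - 1) = cexp ((s - 1) * x) := by
    rw [ofReal_exp, cpow_def_of_ne_zero (exp_ne_zero _),
      log_exp (by simp [pi_pos]) (by simp [pi_nonneg]), mul_comm]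
  rw [abs_of_pos (Real.exp_pos x), hpow, ← smul_assoc, ← Complex.coe_smul, ofReal_exp,
    smul_eq_mul, ← Complex.exp_add]
  ring_nf

theorem mellin_exp_neg_mul {r : ℝ} (hr : 0 < r) {s : ℂ} (hs : 0 < s.re) :
    mellin (fun u : ℝ ↦ cexp (-(r * u))) s = (1 / r) ^ s * Gamma s :=
  integral_cpow_mul_exp_neg_mul_Ioi hs hr

/-- The characteristic function of the density `k(x) = (1/√(2π)) e^{x/2} e^{-e^x/2}`
is `φ_k(t) = (1/√π) 2^{it} Γ(1/2 + it)`. -/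
theorem charFun_log_chi_sq (t : ℝ) :
    ∫ x : ℝ, Complex.exp (Complex.I * t * x) *
        ((1 / Real.sqrt (2 * π) * Real.exp (x / 2) * Real.exp (-Real.exp x / 2) : ℝ) : ℂ) =
      (1 / Real.sqrt π : ℝ) * (2 : ℂ) ^ (Complex.I * t) *
        Complex.Gamma (1 / 2 + Complex.I * t) := by
  set s : ℂ := 1 / 2 + I * t
  have hintegrand : ∀ x : ℝ, cexp (I * t * x) *
        ((1 / √(2 * π) * Real.exp (x / 2) * Real.exp (-Real.exp x / 2) : ℝ) : ℂ) =
      (1 / √(2 * π) : ℝ) * (cexp (s * x) • cexp (-((1 / 2 : ℝ) * Real.exp x))) := by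
    intro x
    push_cast
    simp only [s, smul_eq_mul, add_mul, Complex.exp_add]
    ring_nf
  have hsqrt : (2 : ℂ) ^ s = √2 * 2 ^ (I * t) := by
    rw [cpow_add _ _ two_ne_zero, Real.sqrt_eq_rpow, ofReal_cpow zero_le_two]
    norm_num
  have hconst : 1 / √(2 * π) * √2 = 1 / √π := by
    rw [Real.sqrt_mul zero_le_two]
    field_simp
  simp_rw [hintegrand]
  rw [integral_const_mul,
    ← mellin_eq_integral_exp_mul_comp_exp (fun u : ℝ ↦ cexp (-((1 / 2 : ℝ) * u))),
    mellin_exp_neg_mul one_half_pos (by simp [s]), show 1 / ((1 / 2 : ℝ) : ℂ) = 2 by norm_num,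
    hsqrt, ← hconst]
  push_cast
  ring
end

section
/- Let (W, Z) be real random variables with Z standard normal independent of W, and let v_h be defined by v_h(x) = (1/2π)∫ (φ_w(s)/φ_k(s/h)) e^{-isx} ds where φ_k is the characteristic function of log(Z²) and φ_w is the Fourier transform of a kernel w supported in [-1,1]. Then E[ (1/h) v_h((x − W − log Z²)/h) | W ] = (1/h) w((x − W)/h) almost surely. -/
set_option maxHeartbeats 1000000

open MeasureTheory ProbabilityTheory Complex Real Set

/-- Conditional expectation of the deconvolution kernel applied to
`W + log Z²` given `W` equals the ordinary kernel applied to `W`. -/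
theorem condexp_deconv_kernel {Ω : Type*} [m0 : MeasurableSpace Ω]
    (P : Measure Ω) [IsProbabilityMeasure P]
    (W Z : Ω → ℝ) (hW : Measurable W) (hZmeas : Measurable Z)
    (hZ : Measure.map Z P = gaussianReal 0 1)
    (hindep : IndepFun W Z P)
    (φw φk : ℝ → ℂ) (w : ℝ → ℝ) (h : ℝ) (hh : 0 < h)
    (hφk : ∀ t : ℝ, φk t = ∫ ω, Complex.exp (Complex.I * t * Real.log ((Z ω) ^ 2)) ∂P)
    (hφk_ne : ∀ t, φk t ≠ 0)
    (hφw_supp : ∀ s : ℝ, s ∉ Icc (-1 : ℝ) 1 → φw s = 0)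
    (hφw_int : IntegrableOn φw (Icc (-1 : ℝ) 1))
    (hw : ∀ u : ℝ, (w u : ℂ) = (1 / (2 * π) : ℝ) *
      ∫ s in Icc (-1 : ℝ) 1, φw s * Complex.exp (-Complex.I * s * u))
    (vh : ℝ → ℂ)
    (hvh : vh = fun x : ℝ => (1 / (2 * π) : ℝ) *
      ∫ s in Icc (-1 : ℝ) 1, φw s / φk (s / h) * Complex.exp (-Complex.I * s * x))
    (x : ℝ) :
    P[(fun ω => (1 / h : ℝ) * vh ((x - W ω - Real.log ((Z ω) ^ 2)) / h)) |
        MeasurableSpace.comap W Real.measurableSpace]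
      =ᵐ[P] fun ω => ((1 / h : ℝ) * (w ((x - W ω) / h) : ℂ)) := by
  have hh' : (h : ℝ) ≠ 0 := hh.ne'
  set L : Ω → ℝ := fun ω => Real.log ((Z ω) ^ 2) with hLdef
  have hL : Measurable L := Real.measurable_log.comp (hZmeas.pow_const 2)
  -- continuity of φk
  have hφk_cont : Continuous φk := by
    have hφk' : φk = fun t : ℝ => ∫ ω, Complex.exp (Complex.I * t * L ω) ∂P :=
      funext hφk
    rw [hφk']
    refine continuous_of_dominated (bound := fun _ => (1 : ℝ)) ?_ ?_ (integrable_const _) ?_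
    · intro t
      exact (Measurable.cexp
        (measurable_const.mul (Complex.measurable_ofReal.comp hL))).aestronglyMeasurable
    · intro t
      refine Filter.Eventually.of_forall fun ω => ?_
      have : (Complex.I * t * (L ω : ℂ)) = ((t * L ω : ℝ) : ℂ) * Complex.I := by
        push_cast; ring
      rw [this, Complex.norm_exp_ofReal_mul_I]
    · refine Filter.Eventually.of_forall fun ω => ?_
      exact Continuous.cexp ((continuous_const.mul Complex.continuous_ofReal).mul continuous_const)
  -- lower bound for ‖φk (s/h)‖ on the compact support
  have hKcont : Continuous fun s : ℝ => ‖φk (s / h)‖ :=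
    (hφk_cont.comp (continuous_id.div_const h)).norm
  obtain ⟨s0, hs0, hmin0⟩ := (isCompact_Icc (a := (-1:ℝ)) (b := 1)).exists_isMinOn (f := fun s : ℝ => ‖φk (s / h)‖)
    ⟨(-1 : ℝ), by norm_num⟩ hKcont.continuousOn
  have hmin : ∀ s ∈ Icc (-1 : ℝ) 1, ‖φk (s0 / h)‖ ≤ ‖φk (s / h)‖ := fun s hs => hmin0 hs
  set cb : ℝ := ‖φk (s0 / h)‖ with hcb
  have hcb_pos : 0 < cb := norm_pos_iff.mpr (hφk_ne _)
  -- the deconvolution kernel is integrable on the support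
  set bnd : ℝ → ℝ := fun s => cb⁻¹ * ‖φw s‖ with hbnd
  have hbnd_int : IntegrableOn bnd (Icc (-1 : ℝ) 1) := hφw_int.norm.const_mul _
  have hker_meas : AEStronglyMeasurable (fun s => φw s / φk (s / h))
      (volume.restrict (Icc (-1 : ℝ) 1)) := by
    simp only [div_eq_mul_inv]
    exact hφw_int.1.mul
      (((hφk_cont.comp (continuous_id.div_const h)).measurable.inv).aestronglyMeasurable.restrict)
  have hker_le : ∀ s ∈ Icc (-1 : ℝ) 1, ‖φw s / φk (s / h)‖ ≤ bnd s := by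
    intro s hs
    rw [norm_div]
    show _ ≤ cb⁻¹ * ‖φw s‖
    rw [inv_mul_eq_div]
    exact div_le_div_of_nonneg_left (norm_nonneg _) hcb_pos (hmin s hs)
  have hker_int : IntegrableOn (fun s => φw s / φk (s / h)) (Icc (-1 : ℝ) 1) := by
    refine Integrable.mono' hbnd_int hker_meas ?_
    exact (ae_restrict_iff' measurableSet_Icc).2 (Filter.Eventually.of_forall hker_le)
  have hhC : (h : ℂ) ≠ 0 := Complex.ofReal_ne_zero.mpr hh'
  have hexp1 : ∀ (a b : ℝ), ‖Complex.exp (-Complex.I * a * b)‖ = 1 := by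
    intro a b
    have : (-Complex.I * a * b : ℂ) = ((-(a * b) : ℝ) : ℂ) * Complex.I := by push_cast; ring
    rw [this, Complex.norm_exp_ofReal_mul_I]
  set M : ℝ := ∫ s in Icc (-1 : ℝ) 1, bnd s with hM
  have hnorm_int : ∀ y : ℝ, ‖∫ s in Icc (-1 : ℝ) 1,
      φw s / φk (s / h) * Complex.exp (-Complex.I * s * y)‖ ≤ M := by
    intro y
    refine norm_integral_le_of_norm_le hbnd_int ?_
    refine (ae_restrict_iff' measurableSet_Icc).2 (Filter.Eventually.of_forall fun s hs => ?_)
    rw [norm_mul, hexp1, mul_one]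
    exact hker_le s hs
  have hc2π : ‖((1 / (2 * π) : ℝ) : ℂ)‖ = 1 / (2 * π) := by
    rw [Complex.norm_real, Real.norm_eq_abs, abs_of_pos (by positivity)]
  have hvh_norm : ∀ y, ‖vh y‖ ≤ 1 / (2 * π) * M := by
    intro y
    rw [hvh]
    simp only
    rw [norm_mul, hc2π]
    exact mul_le_mul_of_nonneg_left (hnorm_int y) (by positivity)
  have hvh_cont : Continuous vh := by
    rw [hvh]
    refine continuous_const.mul ?_
    refine continuous_of_dominated (bound := bnd) ?_ ?_ hbnd_int ?_
    · intro y
      refine hker_meas.mul (Measurable.aestronglyMeasurable ?_)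
      exact Measurable.cexp ((measurable_const.mul Complex.measurable_ofReal).mul_const _)
    · intro y
      refine (ae_restrict_iff' measurableSet_Icc).2 (Filter.Eventually.of_forall fun s hs => ?_)
      rw [norm_mul, hexp1, mul_one]
      exact hker_le s hs
    · refine Filter.Eventually.of_forall fun s => ?_
      exact continuous_const.mul
        (Continuous.cexp (continuous_const.mul Complex.continuous_ofReal))
  set M2 : ℝ := ∫ s in Icc (-1 : ℝ) 1, ‖φw s‖ with hM2
  have hwc_norm : ∀ u : ℝ, ‖(w u : ℂ)‖ ≤ 1 / (2 * π) * M2 := by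
    intro u
    rw [hw u, norm_mul, hc2π]
    refine mul_le_mul_of_nonneg_left ?_ (by positivity)
    refine norm_integral_le_of_norm_le hφw_int.norm ?_
    refine Filter.Eventually.of_forall fun s => ?_
    rw [norm_mul, hexp1, mul_one]
  have hwc_cont : Continuous fun u : ℝ => (w u : ℂ) := by
    have : (fun u : ℝ => (w u : ℂ)) = fun u : ℝ => ((1 / (2 * π) : ℝ) : ℂ) *
        ∫ s in Icc (-1 : ℝ) 1, φw s * Complex.exp (-Complex.I * s * (u : ℂ)) := funext hw
    rw [this]
    refine continuous_const.mul ?_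
    refine continuous_of_dominated (bound := fun s => ‖φw s‖) ?_ ?_ hφw_int.norm ?_
    · intro u
      refine hφw_int.1.mul (Measurable.aestronglyMeasurable ?_)
      exact Measurable.cexp ((measurable_const.mul Complex.measurable_ofReal).mul_const _)
    · intro u
      refine Filter.Eventually.of_forall fun s => ?_
      rw [norm_mul, hexp1, mul_one]
    · refine Filter.Eventually.of_forall fun s => ?_
      exact continuous_const.mul
        (Continuous.cexp (continuous_const.mul Complex.continuous_ofReal))
  -- the key computation
  have key : ∀ c : ℝ, ∫ ω, vh ((c - L ω) / h) ∂P = (w (c / h) : ℂ) := by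
    intro c
    set Φ : Ω × ℝ → ℂ := fun p =>
      φw p.2 / φk (p.2 / h) * Complex.exp (-Complex.I * p.2 * (((c - L p.1) / h : ℝ) : ℂ)) with hΦ
    have hΦ_meas : AEStronglyMeasurable Φ (P.prod (volume.restrict (Icc (-1 : ℝ) 1))) := by
      refine hker_meas.comp_snd.mul (Measurable.aestronglyMeasurable ?_)
      refine Measurable.cexp ?_
      exact (measurable_const.mul (Complex.measurable_ofReal.comp measurable_snd)).mul
        (Complex.measurable_ofReal.comp
          ((measurable_const.sub (hL.comp measurable_fst)).div_const h))
    have hΦ_bound : ∀ p : Ω × ℝ, p.2 ∈ Icc (-1 : ℝ) 1 → ‖Φ p‖ ≤ bnd p.2 := by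
      intro p hp
      rw [hΦ]
      simp only
      rw [norm_mul, hexp1, mul_one]
      exact hker_le p.2 hp
    have hΦ_int : Integrable Φ (P.prod (volume.restrict (Icc (-1 : ℝ) 1))) := by
      rw [integrable_prod_iff hΦ_meas]
      constructor
      · refine Filter.Eventually.of_forall fun ω => ?_
        simp only [hΦ]
        refine Integrable.mono' hbnd_int ?_ ?_
        · refine hker_meas.mul (Measurable.aestronglyMeasurable ?_)
          exact Measurable.cexp
            ((measurable_const.mul Complex.measurable_ofReal).mul_const _)
        · refine (ae_restrict_iff' measurableSet_Icc).2
            (Filter.Eventually.of_forall fun s hs => ?_)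
          exact hΦ_bound (ω, s) hs
      · refine Integrable.mono' (integrable_const M) hΦ_meas.norm.integral_prod_right' ?_
        refine Filter.Eventually.of_forall fun ω => ?_
        refine norm_integral_le_of_norm_le hbnd_int ?_
        refine (ae_restrict_iff' measurableSet_Icc).2
          (Filter.Eventually.of_forall fun s hs => ?_)
        rw [norm_norm]
        exact hΦ_bound (ω, s) hs
    rw [hvh]
    simp only
    rw [MeasureTheory.integral_const_mul, hw (c / h)]
    congr 1
    have hswap := integral_integral_swap (f := fun (ω : Ω) (s : ℝ) =>
      φw s / φk (s / h) * Complex.exp (-Complex.I * s * (((c - L ω) / h : ℝ) : ℂ))) hΦ_int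
    rw [hswap]
    refine integral_congr_ae (Filter.Eventually.of_forall fun s => ?_)
    simp only
    rw [MeasureTheory.integral_const_mul]
    have hEint : (∫ ω, Complex.exp (-Complex.I * s * (((c - L ω) / h : ℝ) : ℂ)) ∂P)
        = Complex.exp (-Complex.I * s * ((c / h : ℝ) : ℂ)) * φk (s / h) := by
      have heq : (fun ω => Complex.exp (-Complex.I * s * (((c - L ω) / h : ℝ) : ℂ)))
          = fun ω => Complex.exp (-Complex.I * s * ((c / h : ℝ) : ℂ)) *
              Complex.exp (Complex.I * ((s / h : ℝ) : ℂ) * (L ω)) := by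
        funext ω
        rw [← Complex.exp_add]
        congr 1
        push_cast
        field_simp
        ring
      rw [heq, MeasureTheory.integral_const_mul, ← hφk (s / h)]
    rw [hEint]
    field_simp [hφk_ne (s / h)]
  -- independence of W and L := log Z²
  have hWL : IndepFun W L P :=
    hindep.comp measurable_id (Real.measurable_log.comp (measurable_id.pow_const 2))
  have hmap : P.map (fun ω => (W ω, L ω)) = (P.map W).prod (P.map L) :=
    (indepFun_iff_map_prod_eq_prod_map_map hW.aemeasurable hL.aemeasurable).mp hWL
  haveI : IsProbabilityMeasure (P.map W) := Measure.isProbabilityMeasure_map hW.aemeasurable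
  haveI : IsProbabilityMeasure (P.map L) := Measure.isProbabilityMeasure_map hL.aemeasurable
  set F : ℝ × ℝ → ℂ := fun p => vh ((x - p.1 - p.2) / h) with hF
  have hF_cont : Continuous F :=
    hvh_cont.comp (((continuous_const.sub continuous_fst).sub continuous_snd).div_const h)
  set g : Ω → ℂ := fun ω => ((1 / h : ℝ) : ℂ) * (w ((x - W ω) / h) : ℂ) with hg
  have hm : MeasurableSpace.comap W Real.measurableSpace ≤ m0 := hW.comap_le
  have hf_int : Integrable (fun ω => ((1 / h : ℝ) : ℂ) * vh ((x - W ω - L ω) / h)) P := by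
    refine Integrable.mono' (integrable_const (‖((1 / h : ℝ) : ℂ)‖ * (1 / (2 * π) * M))) ?_ ?_
    · exact (((hvh_cont.measurable.comp
        (((measurable_const.sub hW).sub hL).div_const h)).const_mul _)).aestronglyMeasurable
    · refine Filter.Eventually.of_forall fun ω => ?_
      rw [norm_mul]
      exact mul_le_mul_of_nonneg_left (hvh_norm _) (norm_nonneg _)
  have hg_int : Integrable g P := by
    refine Integrable.mono' (integrable_const (‖((1 / h : ℝ) : ℂ)‖ * (1 / (2 * π) * M2))) ?_ ?_
    · exact ((hwc_cont.comp ((continuous_const.sub continuous_id).div_const h)).measurable.comp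
        hW).const_mul _ |>.aestronglyMeasurable
    · refine Filter.Eventually.of_forall fun ω => ?_
      rw [hg]
      simp only
      rw [norm_mul]
      exact mul_le_mul_of_nonneg_left (hwc_norm _) (norm_nonneg _)
  have hgm : AEStronglyMeasurable[MeasurableSpace.comap W Real.measurableSpace] g P := by
    have hWm : Measurable[MeasurableSpace.comap W Real.measurableSpace] W :=
      Measurable.of_comap_le le_rfl
    exact ((Continuous.stronglyMeasurable (continuous_const.mul
      (hwc_cont.comp ((continuous_const.sub continuous_id).div_const h)))).comp_measurable
        hWm).aestronglyMeasurable
  have hFprod_int : Integrable F ((P.map W).prod (P.map L)) := by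
    refine Integrable.mono' (integrable_const (1 / (2 * π) * M)) hF_cont.aestronglyMeasurable ?_
    exact Filter.Eventually.of_forall fun p => hvh_norm _
  have hset : ∀ s : Set Ω, MeasurableSet[MeasurableSpace.comap W Real.measurableSpace] s →
      P s < ⊤ → ∫ ω in s, g ω ∂P = ∫ ω in s, ((1 / h : ℝ) : ℂ) * vh ((x - W ω - L ω) / h) ∂P := by
    rintro s ⟨t, ht, rfl⟩ -
    have hpre : W ⁻¹' t = (fun ω => (W ω, L ω)) ⁻¹' (t ×ˢ univ) := by
      ext ω; simp
    rw [hg]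
    simp only
    rw [MeasureTheory.integral_const_mul, MeasureTheory.integral_const_mul]
    congr 1
    calc ∫ ω in W ⁻¹' t, (w ((x - W ω) / h) : ℂ) ∂P
        = ∫ a in t, (w ((x - a) / h) : ℂ) ∂(P.map W) := by
          exact (setIntegral_map ht
            ((hwc_cont.comp ((continuous_const.sub continuous_id).div_const h)).aestronglyMeasurable)
            hW.aemeasurable).symm
      _ = ∫ a in t, ∫ b, F (a, b) ∂(P.map L) ∂(P.map W) := by
          refine integral_congr_ae (Filter.Eventually.of_forall fun a => ?_)
          simp only
          rw [show (∫ b, F (a, b) ∂(P.map L)) = ∫ ω, F (a, L ω) ∂P from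
            integral_map hL.aemeasurable
              ((hF_cont.comp (continuous_const.prodMk continuous_id)).aestronglyMeasurable)]
          exact (key (x - a)).symm
      _ = ∫ p in t ×ˢ univ, F p ∂((P.map W).prod (P.map L)) := by
          rw [setIntegral_prod _ hFprod_int.integrableOn]
          simp [Measure.restrict_univ]
      _ = ∫ p in t ×ˢ univ, F p ∂(P.map fun ω => (W ω, L ω)) := by rw [hmap]
      _ = ∫ ω in (fun ω => (W ω, L ω)) ⁻¹' (t ×ˢ univ), F (W ω, L ω) ∂P :=
          setIntegral_map (ht.prod MeasurableSet.univ) hF_cont.aestronglyMeasurable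
            (hW.aemeasurable.prodMk hL.aemeasurable)
      _ = ∫ ω in W ⁻¹' t, vh ((x - W ω - L ω) / h) ∂P := by rw [← hpre]
  exact (ae_eq_condExp_of_forall_setIntegral_eq hm hf_int
    (fun s _ _ => hg_int.integrableOn) hset hgm).symm
end
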